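/- arXiv:1804.05480 — 4 statements merged into one kernel-verified Lean document; each statement's English description precedes it below -/
import Mathlib

section
/- For every k ∈ {1,2,3}, the k-th column u(x) := Γ⁰(x)e_k of the Kelvin matrix satisfies the elastostatic Lamé equation μ Δu_j(x) + (λ+μ) ∂_j(∂_1 u_1 + ∂_2 u_2 + ∂_3 u_3)(x) = 0 for every x ∈ ℝ³ \ {0} and every j ∈ {1,2,3}; that is, L_{λ,μ} Γ⁰ = 0 away from the origin. -/
open Real MeasureTheory

noncomputable section

/-- Euclidean 3-space. -/
abbrev E3 := EuclideanSpace ℝ (Fin 3)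

/-- standard basis vectors -/
def eb (i : Fin 3) : E3 := EuclideanSpace.single i 1

/-- partial derivative in the i-th coordinate direction -/
def pd (i : Fin 3) (f : E3 → ℂ) (x : E3) : ℂ := fderiv ℝ f x (eb i)

/-- Hessian matrix of a scalar function -/
def hess (f : E3 → ℂ) (x : E3) : Matrix (Fin 3) (Fin 3) ℂ :=
  fun j k => pd j (fun y => pd k f y) x

def cT (mu : ℝ) : ℝ := Real.sqrt mu
def cL (lam mu : ℝ) : ℝ := Real.sqrt (lam + 2 * mu)

/-- the rank one matrix x xᵀ -/
def xxT (x : E3) : Matrix (Fin 3) (Fin 3) ℂ := fun j k => ((x j : ℂ) * (x k : ℂ))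

/-- The Kupradze fundamental matrix Γ^ω. -/
def kupradze (lam mu : ℝ) (ω : ℂ) (x : E3) : Matrix (Fin 3) (Fin 3) ℂ :=
  (-(Complex.exp (Complex.I * ω * (‖x‖ : ℂ) / (cT mu : ℂ)) / (4 * (π : ℂ) * (mu : ℂ) * (‖x‖ : ℂ)))) •
      (1 : Matrix (Fin 3) (Fin 3) ℂ)
    + (1 / (4 * (π : ℂ) * ω ^ 2)) •
      hess (fun y =>
        (Complex.exp (Complex.I * ω * (‖y‖ : ℂ) / (cT mu : ℂ))
          - Complex.exp (Complex.I * ω * (‖y‖ : ℂ) / (cL lam mu : ℂ))) / (‖y‖ : ℂ)) x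

def gamma1 (lam mu : ℝ) : ℝ := (1 / 2) * (1 / mu + 1 / (2 * mu + lam))
def gamma2 (lam mu : ℝ) : ℝ := (1 / 2) * (1 / mu - 1 / (2 * mu + lam))

/-- The Kelvin matrix Γ⁰. -/
def kelvin (lam mu : ℝ) (x : E3) : Matrix (Fin 3) (Fin 3) ℂ :=
  (-(((gamma1 lam mu) / (4 * π) : ℝ) : ℂ) * (1 / (‖x‖ : ℂ))) • (1 : Matrix (Fin 3) (Fin 3) ℂ)
    - ((((gamma2 lam mu) / (4 * π) : ℝ) : ℂ) / (‖x‖ : ℂ) ^ 3) • xxT x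

def gamma3 (lam mu : ℝ) : ℂ :=
  (-Complex.I / (12 * (π : ℂ))) * (2 / (cT mu : ℂ) ^ 3 + 1 / (cL lam mu : ℂ) ^ 3)

/-- The matrix Λ(x). -/
def lambdaMat (lam mu : ℝ) (x : E3) : Matrix (Fin 3) (Fin 3) ℂ :=
  (((1 / (32 * π)) * (3 / (cT mu) ^ 4 + 1 / (cL lam mu) ^ 4) * ‖x‖ : ℝ) : ℂ) •
      (1 : Matrix (Fin 3) (Fin 3) ℂ)
    - ((((1 / (32 * π)) * (1 / (cT mu) ^ 4 - 1 / (cL lam mu) ^ 4) / ‖x‖ : ℝ) : ℂ)) • xxT x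

/-- The Lamé operator L_{λ,μ} applied to a vector field. -/
def lame (lam mu : ℝ) (u : E3 → Fin 3 → ℂ) (x : E3) (j : Fin 3) : ℂ :=
  (mu : ℂ) * (∑ i : Fin 3, pd i (fun y => pd i (fun z => u z j) y) x)
    + ((lam : ℂ) + (mu : ℂ)) * pd j (fun y => ∑ i : Fin 3, pd i (fun z => u z i) y) x

/-- Conormal derivative ∂u/∂ν. -/
def conormal (lam mu : ℝ) (u : E3 → Fin 3 → ℂ) (ν : E3) (x : E3) (j : Fin 3) : ℂ :=
  (lam : ℂ) * (∑ i : Fin 3, pd i (fun z => u z i) x) * (ν j : ℂ)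
    + (mu : ℂ) * ∑ l : Fin 3,
        (pd l (fun z => u z j) x + pd j (fun z => u z l) x) * (ν l : ℂ)

/-!
Write `Γ⁰_{jk}(x) = -a δ_{jk} r⁻¹ - b x_j x_k r⁻³` with `r = ‖x‖`, `a = γ₁/4π`, `b = γ₂/4π`.
Differentiating twice and using `r⁻² ∑ x_p² = 1`, the Laplacian of the `(j,k)` entry is
`-2b h_{jk}` and the `j`-th derivative of the divergence of the `k`-th column is `(a - b) h_{jk}`,
where `h_{jk} = δ_{jk} r⁻³ - 3 x_j x_k r⁻⁵`. So `L_{λ,μ} Γ⁰ e_k = ((λ+μ)(a-b) - 2μb) h_{·k}`,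
and the bracket vanishes because `(λ+μ)(γ₁ - γ₂) = (λ+μ)/(2μ+λ) = 2μγ₂`.
-/

open Filter Topology

theorem hasFDerivAt_norm_inv {F : Type*} [NormedAddCommGroup F] [InnerProductSpace ℝ F] {x : F}
    (hx : x ≠ 0) : HasFDerivAt (fun y : F => ‖y‖⁻¹) (-(‖x‖⁻¹ ^ 3) • innerSL ℝ x) x := by
  have hsq : HasFDerivAt (fun y : F => ‖y‖ ^ 2) (2 • innerSL ℝ x) x :=
    (hasStrictFDerivAt_norm_sq x).hasFDerivAt
  have h := (hasDerivAt_inv (by positivity)).comp_hasFDerivAt x (hsq.sqrt (by positivity))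
  simp only [Function.comp_def, Real.sqrt_sq (norm_nonneg _)] at h
  refine h.congr_fderiv (ContinuousLinearMap.ext fun v => ?_)
  simp only [smul_apply, coe_innerSL_apply, smul_eq_mul, nsmul_eq_mul, Nat.cast_ofNat]
  field_simp

theorem HasGradientAt.sum {F ι : Type*} [NormedAddCommGroup F] [InnerProductSpace ℝ F]
    [CompleteSpace F] (s : Finset ι) {f : ι → F → ℝ} {f' : ι → F} {x : F}
    (h : ∀ i ∈ s, HasGradientAt (f i) (f' i) x) :
    HasGradientAt (fun y => ∑ i ∈ s, f i y) (∑ i ∈ s, f' i) x := by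
  rw [hasGradientAt_iff_hasFDerivAt, map_sum]
  exact HasFDerivAt.fun_sum h

theorem EuclideanSpace.sum_sq_mul_norm_inv_sq {ι : Type*} [Fintype ι] {x : EuclideanSpace ℝ ι}
    (hx : x ≠ 0) : (∑ p, x p ^ 2) * ‖x‖⁻¹ ^ 2 = 1 := by
  have hsum : ∑ p, x p ^ 2 = ‖x‖ ^ 2 := by simp [EuclideanSpace.norm_sq_eq]
  rw [hsum, ← mul_pow, mul_inv_cancel₀ (norm_ne_zero_iff.mpr hx), one_pow]

theorem pd_ofReal_of_hasGradientAt {f : E3 → ℝ} {g x : E3} (h : HasGradientAt f g x)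
    (i : Fin 3) : pd i (fun y => (f y : ℂ)) x = g i := by
  have h' : HasFDerivAt (fun y => (f y : ℂ)) _ x :=
    Complex.ofRealCLM.hasFDerivAt.comp x h.hasFDerivAt
  rw [pd, h'.fderiv]
  simp [eb, EuclideanSpace.inner_single_right]

theorem pd_congr_of_eventuallyEq {f g : E3 → ℂ} {x : E3} (h : f =ᶠ[𝓝 x] g) (i : Fin 3) :
    pd i f x = pd i g x := by
  rw [pd, pd, h.fderiv_eq]

theorem add_mul_gamma1_sub_gamma2 {lam mu : ℝ} (hmu : mu ≠ 0) (hlam : 2 * mu + lam ≠ 0) :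
    (lam + mu) * (gamma1 lam mu - gamma2 lam mu) = 2 * mu * gamma2 lam mu := by
  rw [gamma1, gamma2, div_add_div _ _ hmu hlam, div_sub_div _ _ hmu hlam]
  field_simp
  ring

namespace Kelvin

def kron (i j : Fin 3) : ℝ := if i = j then 1 else 0

theorem kron_self (i : Fin 3) : kron i i = 1 := if_pos rfl

theorem kron_comm (i j : Fin 3) : kron i j = kron j i := by
  simp [kron, eq_comm]

theorem sum_kron_mul (i : Fin 3) (f : Fin 3 → ℝ) : ∑ p, kron i p * f p = f i := by
  simp [kron]

def entry (a b : ℝ) (j k : Fin 3) (y : E3) : ℝ :=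
  -(a * kron j k) * ‖y‖⁻¹ - b * (y j * y k * ‖y‖⁻¹ ^ 3)

def entryGrad (a b : ℝ) (j k p : Fin 3) (y : E3) : ℝ :=
  a * kron j k * (y p * ‖y‖⁻¹ ^ 3)
    - b * ((kron j p * y k + kron k p * y j) * ‖y‖⁻¹ ^ 3 - 3 * (y j * y k * y p * ‖y‖⁻¹ ^ 5))

def entryHess (a b : ℝ) (j k p q : Fin 3) (y : E3) : ℝ :=
  a * kron j k * (kron p q * ‖y‖⁻¹ ^ 3 - 3 * y p * y q * ‖y‖⁻¹ ^ 5)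
    - b * ((kron j p * kron k q + kron k p * kron j q) * ‖y‖⁻¹ ^ 3
      - 3 * (kron j p * y k + kron k p * y j) * y q * ‖y‖⁻¹ ^ 5
      - 3 * (kron j q * y k * y p + kron k q * y j * y p + kron p q * y j * y k) * ‖y‖⁻¹ ^ 5
      + 15 * y j * y k * y p * y q * ‖y‖⁻¹ ^ 7)

theorem kelvin_apply (lam mu : ℝ) (y : E3) (j k : Fin 3) :
    kelvin lam mu y j k = entry (gamma1 lam mu / (4 * π)) (gamma2 lam mu / (4 * π)) j k y := by
  simp only [kelvin, entry, kron, xxT, Matrix.sub_apply, Matrix.smul_apply, Matrix.one_apply,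
    smul_eq_mul]
  split_ifs <;> push_cast <;> ring

theorem hasGradientAt_entry (a b : ℝ) (j k : Fin 3) {x : E3} (hx : x ≠ 0) :
    HasGradientAt (entry a b j k) (WithLp.toLp 2 fun p => entryGrad a b j k p x) x := by
  have hs := hasFDerivAt_norm_inv hx
  have hyj := PiLp.hasFDerivAt_apply (𝕜 := ℝ) 2 x j
  have hyk := PiLp.hasFDerivAt_apply (𝕜 := ℝ) 2 x k
  have h := (hs.const_mul (-(a * kron j k))).sub
    (((hyj.mul hyk).mul ((hasDerivAt_pow 3 _).comp_hasFDerivAt x hs)).const_mul b)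
  refine h.congr_fderiv (ContinuousLinearMap.ext fun v => ?_)
  have hj := sum_kron_mul j fun p => v p
  have hk := sum_kron_mul k fun p => v p
  simp only [entryGrad, Function.comp_apply, Pi.mul_apply, add_apply, sub_apply, smul_apply,
    coe_innerSL_apply, PiLp.proj_apply, InnerProductSpace.toDual_apply_apply, PiLp.inner_apply,
    RCLike.inner_apply, conj_trivial, Fin.sum_univ_three, smul_eq_mul] at hj hk ⊢
  linear_combination b * x k * ‖x‖⁻¹ ^ 3 * hj + b * x j * ‖x‖⁻¹ ^ 3 * hk

theorem hasGradientAt_entryGrad (a b : ℝ) (j k p : Fin 3) {x : E3} (hx : x ≠ 0) :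
    HasGradientAt (entryGrad a b j k p) (WithLp.toLp 2 fun q => entryHess a b j k p q x) x := by
  have hs := hasFDerivAt_norm_inv hx
  have hs3 := (hasDerivAt_pow 3 _).comp_hasFDerivAt x hs
  have hs5 := (hasDerivAt_pow 5 _).comp_hasFDerivAt x hs
  have hyj := PiLp.hasFDerivAt_apply (𝕜 := ℝ) 2 x j
  have hyk := PiLp.hasFDerivAt_apply (𝕜 := ℝ) 2 x k
  have hyp := PiLp.hasFDerivAt_apply (𝕜 := ℝ) 2 x p
  have h1 := (hyp.mul hs3).const_mul (a * kron j k)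
  have h2 := ((hyk.const_mul (kron j p)).add (hyj.const_mul (kron k p))).mul hs3
  have h3 := (((hyj.mul hyk).mul hyp).mul hs5).const_mul 3
  refine (h1.sub ((h2.sub h3).const_mul b)).congr_fderiv (ContinuousLinearMap.ext fun v => ?_)
  have hj := sum_kron_mul j fun q => v q
  have hk := sum_kron_mul k fun q => v q
  have hp := sum_kron_mul p fun q => v q
  simp only [entryHess, Function.comp_apply, Pi.mul_apply, Pi.add_apply, add_apply, sub_apply,
    smul_apply, coe_innerSL_apply, PiLp.proj_apply, InnerProductSpace.toDual_apply_apply,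
    PiLp.inner_apply, RCLike.inner_apply, conj_trivial, Fin.sum_univ_three, smul_eq_mul]
    at hj hk hp ⊢
  linear_combination -a * kron j k * ‖x‖⁻¹ ^ 3 * hp + b * kron j p * ‖x‖⁻¹ ^ 3 * hk
    + b * kron k p * ‖x‖⁻¹ ^ 3 * hj - 3 * b * x k * x p * ‖x‖⁻¹ ^ 5 * hj
    - 3 * b * x j * x p * ‖x‖⁻¹ ^ 5 * hk - 3 * b * x j * x k * ‖x‖⁻¹ ^ 5 * hp

theorem sum_entryHess_self (a b : ℝ) (j k : Fin 3) {x : E3} (hx : x ≠ 0) :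
    ∑ p, entryHess a b j k p p x
      = -2 * b * (kron j k * ‖x‖⁻¹ ^ 3 - 3 * x j * x k * ‖x‖⁻¹ ^ 5) := by
  have hS := EuclideanSpace.sum_sq_mul_norm_inv_sq hx
  have hD := sum_kron_mul j fun p => kron k p
  have hj := sum_kron_mul j fun p => x p
  have hk := sum_kron_mul k fun p => x p
  simp only [entryHess, Fin.sum_univ_three, kron_self, kron_comm k j] at hS hD hj hk ⊢
  linear_combination -2 * b * ‖x‖⁻¹ ^ 3 * hD + 6 * b * ‖x‖⁻¹ ^ 5 * x k * hj
    + 6 * b * ‖x‖⁻¹ ^ 5 * x j * hk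
    - (3 * a * kron j k * ‖x‖⁻¹ ^ 3 + 15 * b * x j * x k * ‖x‖⁻¹ ^ 5) * hS

theorem sum_entryHess_div (a b : ℝ) (j k : Fin 3) {x : E3} (hx : x ≠ 0) :
    ∑ p, entryHess a b p k p j x
      = (a - b) * (kron j k * ‖x‖⁻¹ ^ 3 - 3 * x j * x k * ‖x‖⁻¹ ^ 5) := by
  have hS := EuclideanSpace.sum_sq_mul_norm_inv_sq hx
  have hD := sum_kron_mul j fun p => kron k p
  have hj := sum_kron_mul j fun p => x p
  have hk := sum_kron_mul k fun p => x p
  -- put the free indices `j`, `k` first in every `kron`, as in `hD`, `hj`, `hk`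
  simp only [entryHess, Fin.sum_univ_three, kron_self, kron_comm k j, kron_comm 0 j,
    kron_comm 1 j, kron_comm 2 j, kron_comm 0 k, kron_comm 1 k, kron_comm 2 k] at hS hD hj hk ⊢
  linear_combination (a - b) * ‖x‖⁻¹ ^ 3 * hD - 3 * (a - b) * ‖x‖⁻¹ ^ 5 * x j * hk
    + 6 * b * ‖x‖⁻¹ ^ 5 * x k * hj
    + (3 * b * kron j k * ‖x‖⁻¹ ^ 3 - 15 * b * x j * x k * ‖x‖⁻¹ ^ 5) * hS

variable {lam mu : ℝ} {x : E3}

theorem pd_kelvin_eventuallyEq (hx : x ≠ 0) (i k p : Fin 3) :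
    (fun y => pd p (fun z => kelvin lam mu z i k) y) =ᶠ[𝓝 x]
      fun y => (entryGrad (gamma1 lam mu / (4 * π)) (gamma2 lam mu / (4 * π)) i k p y : ℂ) := by
  filter_upwards [eventually_ne_nhds hx] with y hy
  simpa [kelvin_apply] using pd_ofReal_of_hasGradientAt (hasGradientAt_entry _ _ i k hy) p

theorem pd_pd_kelvin (hx : x ≠ 0) (i k p q : Fin 3) :
    pd q (fun y => pd p (fun z => kelvin lam mu z i k) y) x
      = entryHess (gamma1 lam mu / (4 * π)) (gamma2 lam mu / (4 * π)) i k p q x := by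
  rw [pd_congr_of_eventuallyEq (pd_kelvin_eventuallyEq hx i k p)]
  simpa using pd_ofReal_of_hasGradientAt (hasGradientAt_entryGrad _ _ i k p hx) q

theorem pd_div_kelvin (hx : x ≠ 0) (k q : Fin 3) :
    pd q (fun y => ∑ i, pd i (fun z => kelvin lam mu z i k) y) x
      = ∑ i, entryHess (gamma1 lam mu / (4 * π)) (gamma2 lam mu / (4 * π)) i k i q x := by
  have hdiv : (fun y => ∑ i, pd i (fun z => kelvin lam mu z i k) y) =ᶠ[𝓝 x] fun y =>
      ((∑ i, entryGrad (gamma1 lam mu / (4 * π)) (gamma2 lam mu / (4 * π)) i k i y : ℝ) : ℂ) := by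
    filter_upwards [eventually_all.2 fun i =>
      pd_kelvin_eventuallyEq (lam := lam) (mu := mu) hx i k i] with y hy
    simp [hy]
  rw [pd_congr_of_eventuallyEq hdiv]
  simpa using pd_ofReal_of_hasGradientAt
    (HasGradientAt.sum _ fun i _ => hasGradientAt_entryGrad _ _ i k i hx) q

end Kelvin

open Kelvin

/-- each column of the Kelvin matrix solves the elastostatic
Lamé equation `L_{λ,μ} Γ⁰ = 0` away from the origin. -/
theorem kelvin_column_solves_lame (lam mu : ℝ) (hmu : 0 < mu) (hconv : 0 < 3 * lam + 2 * mu)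
    (k : Fin 3) (x : E3) (hx : x ≠ 0) (j : Fin 3) :
    lame lam mu (fun y i => kelvin lam mu y i k) x j = 0 := by
  have hγ := add_mul_gamma1_sub_gamma2 hmu.ne' (by linarith : 2 * mu + lam ≠ 0)
  rw [lame, pd_div_kelvin hx]
  simp only [pd_pd_kelvin hx]
  norm_cast
  rw [sum_entryHess_self _ _ j k hx, sum_entryHess_div _ _ j k hx]
  linear_combination (kron j k * ‖x‖⁻¹ ^ 3 - 3 * x j * x k * ‖x‖⁻¹ ^ 5) / (4 * π) * hγ
end
end

section
/- (Key identity in the proof of Lemma 2.2, eq. (2.31)) For every k ∈ {1,2,3}, the k-th column v(x) := Λ(x)e_k of the matrix Λ satisfies μ Δv_j(x) + (λ+μ) ∂_j(∂_1 v_1 + ∂_2 v_2 + ∂_3 v_3)(x) = −(Γ⁰(x))_{jk} for every x ∈ ℝ³ \ {0} and every j ∈ {1,2,3}; that is, L_{λ,μ} Λ = −Γ⁰ away from the origin. -/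
open Real MeasureTheory

noncomputable section

/-!
The `k`-th column of `Λ` has the form `u(y) = a ‖y‖ e_k - b (y_k / ‖y‖) y`. Its divergence is
`(a - 3b) y_k / ‖y‖`, whose gradient is `(a - 3b)` times the Hessian `δ_jk / ‖y‖ - y_j y_k / ‖y‖³`
of `‖y‖`, and its Laplacian is `2(a - b) δ_jk / ‖y‖ + 4b y_j y_k / ‖y‖³`. So `L_{λ,μ} u` is again a
combination of `δ_jk / ‖y‖` and `y_j y_k / ‖y‖³`, and for the values of `a` and `b` in `Λ`
(where `c_T⁴ = μ²` and `c_L⁴ = (λ + 2μ)²`) its coefficients are `γ₁ / 4π` and `γ₂ / 4π`.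
-/

open Topology

namespace LameKelvin

def kron (i j : Fin 3) : ℝ := if i = j then 1 else 0

lemma kron_self (i : Fin 3) : kron i i = 1 := if_pos rfl

lemma sum_kron_mul (j : Fin 3) (f : Fin 3 → ℝ) : ∑ m, kron m j * f m = f j := by
  simp [kron]

lemma sum_coord_sq_mul_inv_norm_sq {y : E3} (hy : y ≠ 0) : (∑ m, y m ^ 2) * ‖y‖⁻¹ ^ 2 = 1 := by
  rw [← EuclideanSpace.real_norm_sq_eq, ← mul_pow, mul_inv_cancel₀ (norm_ne_zero_iff.mpr hy),
    one_pow]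

lemma pd_ofReal {g : E3 → ℝ} {D : E3 →L[ℝ] ℝ} {y : E3} (h : HasFDerivAt g D y) (i : Fin 3) :
    pd i (fun z => (g z : ℂ)) y = D (eb i) := by
  have hc : HasFDerivAt (fun z => (g z : ℂ)) (Complex.ofRealCLM.comp D) y :=
    Complex.ofRealCLM.hasFDerivAt.comp y h
  rw [pd, hc.fderiv]
  rfl

lemma pd_congr {f g : E3 → ℂ} {y : E3} (h : f =ᶠ[𝓝 y] g) (i : Fin 3) : pd i f y = pd i g y := by
  rw [pd, pd, h.fderiv_eq]

section Derivatives

variable {y : E3}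

lemma hasFDerivAt_norm_of_ne_zero (hy : y ≠ 0) :
    HasFDerivAt (fun z : E3 => ‖z‖) (‖y‖⁻¹ • innerSL ℝ y) y := by
  have h := (hasStrictFDerivAt_norm_sq y).hasFDerivAt.sqrt (by positivity)
  simp only [Real.sqrt_sq (norm_nonneg _)] at h
  refine h.congr_fderiv ?_
  ext v
  simp only [one_div, mul_inv_rev, smul_apply, coe_innerSL_apply, nsmul_eq_mul, Nat.cast_ofNat,
    smul_eq_mul]
  field_simp

lemma hasFDerivAt_coord (p : Fin 3) :
    HasFDerivAt (fun z : E3 => z p) (EuclideanSpace.proj (𝕜 := ℝ) p) y :=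
  (EuclideanSpace.proj p (𝕜 := ℝ) (ι := Fin 3)).hasFDerivAt (x := y)

lemma innerSL_eb (l : Fin 3) : innerSL ℝ y (eb l) = y l := by
  simp [eb, EuclideanSpace.inner_single_right]

lemma proj_eb (p l : Fin 3) : EuclideanSpace.proj (𝕜 := ℝ) p (eb l) = kron l p := by
  simp [eb, kron, eq_comm]

lemma hasFDerivAt_inv_norm (hy : y ≠ 0) :
    HasFDerivAt (fun z : E3 => ‖z‖⁻¹) (-(‖y‖⁻¹ ^ 3) • innerSL ℝ y) y := by
  have hr : ‖y‖ ≠ 0 := norm_ne_zero_iff.mpr hy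
  refine ((hasDerivAt_inv hr).comp_hasFDerivAt y (hasFDerivAt_norm_of_ne_zero hy)).congr_fderiv ?_
  rw [smul_smul]
  congr 1
  field_simp

def unitCoord (p : Fin 3) (y : E3) : ℝ := y p * ‖y‖⁻¹

def unitCoord3 (p q s : Fin 3) (y : E3) : ℝ := y p * y q * y s * ‖y‖⁻¹ ^ 3

lemma hasFDerivAt_unitCoord (hy : y ≠ 0) (p : Fin 3) :
    ∃ D : E3 →L[ℝ] ℝ, HasFDerivAt (unitCoord p) D y ∧
      ∀ l, D (eb l) = kron l p * ‖y‖⁻¹ - y l * y p * ‖y‖⁻¹ ^ 3 := by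
  refine ⟨_, (hasFDerivAt_coord p).mul (hasFDerivAt_inv_norm hy), fun l => ?_⟩
  simp only [add_apply, smul_apply, innerSL_eb, proj_eb, smul_eq_mul]
  ring

lemma hasFDerivAt_cubic (hy : y ≠ 0) (p q s : Fin 3) :
    ∃ D : E3 →L[ℝ] ℝ, HasFDerivAt (unitCoord3 p q s) D y ∧
      ∀ l, D (eb l)
        = (kron l p * y q * y s + kron l q * y p * y s + kron l s * y p * y q) * ‖y‖⁻¹ ^ 3
          - 3 * y l * y p * y q * y s * ‖y‖⁻¹ ^ 5 := by
  refine ⟨_, (((hasFDerivAt_coord p).mul (hasFDerivAt_coord q)).mul (hasFDerivAt_coord s)).mul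
    ((hasFDerivAt_inv_norm hy).pow 3), fun l => ?_⟩
  simp only [add_apply, smul_apply, Pi.mul_apply, innerSL_eb, proj_eb, smul_eq_mul]
  ring

end Derivatives

section Column

variable (a b : ℝ) (k : Fin 3)

def lambdaCol (i : Fin 3) (y : E3) : ℝ := a * ‖y‖ * kron i k - b * (y i * y k * ‖y‖⁻¹)

def lambdaColDeriv (i m : Fin 3) (y : E3) : ℝ :=
  a * kron i k * unitCoord m y
    - b * (kron m i * unitCoord k y + kron m k * unitCoord i y - unitCoord3 m i k y)

variable {a b k}

lemma pd_lambdaCol {y : E3} (hy : y ≠ 0) (i m : Fin 3) :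
    pd m (fun z => (lambdaCol a b k i z : ℂ)) y = lambdaColDeriv a b k i m y := by
  have h : HasFDerivAt (lambdaCol a b k i) _ y :=
    (((hasFDerivAt_norm_of_ne_zero hy).const_mul a).mul_const (kron i k)).sub
      ((((hasFDerivAt_coord i).mul (hasFDerivAt_coord k)).mul (hasFDerivAt_inv_norm hy)).const_mul b)
  rw [pd_ofReal h]
  simp only [sub_apply, add_apply, smul_apply, innerSL_eb, proj_eb, smul_eq_mul, Pi.mul_apply,
    lambdaColDeriv, unitCoord, unitCoord3]
  push_cast
  ring

lemma sum_lambdaColDeriv_self {y : E3} (hy : y ≠ 0) :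
    ∑ i, lambdaColDeriv a b k i i y = (a - 3 * b) * unitCoord k y := by
  have hk := sum_kron_mul k (fun m => y m)
  have hs := sum_coord_sq_mul_inv_norm_sq hy
  simp only [Fin.sum_univ_three] at hk hs ⊢
  simp only [lambdaColDeriv, unitCoord, unitCoord3, kron_self]
  linear_combination (a - b) * ‖y‖⁻¹ * hk + b * y k * ‖y‖⁻¹ * hs

lemma pd_div_lambdaCol {x : E3} (hx : x ≠ 0) (j : Fin 3) :
    pd j (fun y => ∑ i, pd i (fun z => (lambdaCol a b k i z : ℂ)) y) x
      = ((a - 3 * b) * (kron j k * ‖x‖⁻¹ - x j * x k * ‖x‖⁻¹ ^ 3) : ℝ) := by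
  have hdiv : (fun y => ∑ i, pd i (fun z => (lambdaCol a b k i z : ℂ)) y)
      =ᶠ[𝓝 x] fun y => (((a - 3 * b) * unitCoord k y : ℝ) : ℂ) := by
    filter_upwards [isOpen_ne.mem_nhds hx] with y hy
    simp only [pd_lambdaCol hy]
    exact_mod_cast sum_lambdaColDeriv_self hy
  obtain ⟨D, hD, hDl⟩ := hasFDerivAt_unitCoord hx k
  rw [pd_congr hdiv, pd_ofReal (hD.const_mul _), smul_apply, hDl, smul_eq_mul]

lemma pd_pd_lambdaCol_self {x : E3} (hx : x ≠ 0) (j m : Fin 3) :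
    pd m (fun y => pd m (fun z => (lambdaCol a b k j z : ℂ)) y) x
      = ((a * kron j k * (‖x‖⁻¹ - x m ^ 2 * ‖x‖⁻¹ ^ 3)
        - b * (kron m j * (kron m k * ‖x‖⁻¹ - x m * x k * ‖x‖⁻¹ ^ 3)
          + kron m k * (kron m j * ‖x‖⁻¹ - x m * x j * ‖x‖⁻¹ ^ 3)
          - ((x j * x k + kron m j * x m * x k + kron m k * x m * x j) * ‖x‖⁻¹ ^ 3
            - 3 * x m ^ 2 * x j * x k * ‖x‖⁻¹ ^ 5)) : ℝ) : ℂ) := by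
  have hgrad : (fun y => pd m (fun z => (lambdaCol a b k j z : ℂ)) y)
      =ᶠ[𝓝 x] fun y => (lambdaColDeriv a b k j m y : ℂ) := by
    filter_upwards [isOpen_ne.mem_nhds hx] with y hy
    exact pd_lambdaCol hy j m
  obtain ⟨Dm, hDm, hDml⟩ := hasFDerivAt_unitCoord hx m
  obtain ⟨Dk, hDk, hDkl⟩ := hasFDerivAt_unitCoord hx k
  obtain ⟨Dj, hDj, hDjl⟩ := hasFDerivAt_unitCoord hx j
  obtain ⟨Dc, hDc, hDcl⟩ := hasFDerivAt_cubic hx m j k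
  have h : HasFDerivAt (lambdaColDeriv a b k j m) _ x :=
    (hDm.const_mul (a * kron j k)).sub
      ((((hDk.const_mul (kron m j)).add (hDj.const_mul (kron m k))).sub hDc).const_mul b)
  rw [pd_congr hgrad, pd_ofReal h]
  simp only [sub_apply, add_apply, smul_apply, smul_eq_mul, hDml, hDkl, hDjl, hDcl, kron_self]
  congr 1
  ring

lemma laplacian_lambdaCol {x : E3} (hx : x ≠ 0) (j : Fin 3) :
    ∑ m, pd m (fun y => pd m (fun z => (lambdaCol a b k j z : ℂ)) y) x
      = ((2 * (a - b) * kron j k * ‖x‖⁻¹ + 4 * b * x j * x k * ‖x‖⁻¹ ^ 3 : ℝ) : ℂ) := by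
  simp only [pd_pd_lambdaCol_self hx, ← Complex.ofReal_sum]
  congr 1
  have hjk := sum_kron_mul j (fun m => kron m k)
  have hj := sum_kron_mul j (fun m => x m)
  have hk := sum_kron_mul k (fun m => x m)
  have hs := sum_coord_sq_mul_inv_norm_sq hx
  simp only [Fin.sum_univ_three] at hjk hj hk hs ⊢
  linear_combination (-a * kron j k * ‖x‖⁻¹ - 3 * b * x j * x k * ‖x‖⁻¹ ^ 3) * hs
    - 2 * b * ‖x‖⁻¹ * hjk + 2 * b * x k * ‖x‖⁻¹ ^ 3 * hj + 2 * b * x j * ‖x‖⁻¹ ^ 3 * hk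

lemma lame_lambdaCol (lam mu : ℝ) {x : E3} (hx : x ≠ 0) (j : Fin 3) :
    lame lam mu (fun y i => (lambdaCol a b k i y : ℂ)) x j
      = (((2 * mu * (a - b) + (lam + mu) * (a - 3 * b)) * kron j k * ‖x‖⁻¹
          + (4 * mu * b - (lam + mu) * (a - 3 * b)) * x j * x k * ‖x‖⁻¹ ^ 3 : ℝ) : ℂ) := by
  rw [lame, laplacian_lambdaCol hx, pd_div_lambdaCol hx]
  push_cast
  ring

end Column

def lambdaMatCoeffA (lam mu : ℝ) : ℝ := 1 / (32 * π) * (3 / cT mu ^ 4 + 1 / cL lam mu ^ 4)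

def lambdaMatCoeffB (lam mu : ℝ) : ℝ := 1 / (32 * π) * (1 / cT mu ^ 4 - 1 / cL lam mu ^ 4)

lemma lambdaMat_apply (lam mu : ℝ) (y : E3) (i k : Fin 3) :
    lambdaMat lam mu y i k = lambdaCol (lambdaMatCoeffA lam mu) (lambdaMatCoeffB lam mu) k i y := by
  simp only [lambdaMat, lambdaCol, lambdaMatCoeffA, lambdaMatCoeffB, kron, xxT, Matrix.sub_apply,
    Matrix.smul_apply, Matrix.one_apply, smul_eq_mul]
  push_cast [apply_ite Complex.ofReal]
  ring

lemma neg_kelvin_apply (lam mu : ℝ) (x : E3) (j k : Fin 3) :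
    -kelvin lam mu x j k
      = ((gamma1 lam mu / (4 * π) * kron j k * ‖x‖⁻¹
          + gamma2 lam mu / (4 * π) * x j * x k * ‖x‖⁻¹ ^ 3 : ℝ) : ℂ) := by
  simp only [kelvin, kron, xxT, Matrix.sub_apply, Matrix.smul_apply, Matrix.one_apply, smul_eq_mul]
  push_cast [apply_ite Complex.ofReal]
  ring

lemma cT_pow_four {mu : ℝ} (hmu : 0 ≤ mu) : cT mu ^ 4 = mu ^ 2 := by
  rw [cT, show 4 = 2 * 2 from rfl, pow_mul, Real.sq_sqrt hmu]

lemma cL_pow_four {lam mu : ℝ} (hL : 0 ≤ lam + 2 * mu) : cL lam mu ^ 4 = (lam + 2 * mu) ^ 2 := by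
  rw [cL, show 4 = 2 * 2 from rfl, pow_mul, Real.sq_sqrt hL]

lemma lambdaMatCoeff_isotropic {lam mu : ℝ} (hmu : 0 < mu) (hL : 0 < lam + 2 * mu) :
    2 * mu * (lambdaMatCoeffA lam mu - lambdaMatCoeffB lam mu)
      + (lam + mu) * (lambdaMatCoeffA lam mu - 3 * lambdaMatCoeffB lam mu)
      = gamma1 lam mu / (4 * π) := by
  rw [lambdaMatCoeffA, lambdaMatCoeffB, cT_pow_four hmu.le, cL_pow_four hL.le, gamma1,
    show 2 * mu + lam = lam + 2 * mu by ring, show lam + mu = lam + 2 * mu - mu by ring]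
  generalize lam + 2 * mu = L at hL ⊢
  field_simp
  ring

lemma lambdaMatCoeff_rankOne {lam mu : ℝ} (hmu : 0 < mu) (hL : 0 < lam + 2 * mu) :
    4 * mu * lambdaMatCoeffB lam mu
      - (lam + mu) * (lambdaMatCoeffA lam mu - 3 * lambdaMatCoeffB lam mu)
      = gamma2 lam mu / (4 * π) := by
  rw [lambdaMatCoeffA, lambdaMatCoeffB, cT_pow_four hmu.le, cL_pow_four hL.le, gamma2,
    show 2 * mu + lam = lam + 2 * mu by ring, show lam + mu = lam + 2 * mu - mu by ring]
  generalize lam + 2 * mu = L at hL ⊢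
  field_simp
  ring

end LameKelvin

/-- eq. (2.31): `L_{λ,μ} Λ = −Γ⁰` away from the origin. -/
theorem lame_lambdaMat_eq_neg_kelvin (lam mu : ℝ) (hmu : 0 < mu)
    (hconv : 0 < 3 * lam + 2 * mu) (k : Fin 3) (x : E3) (hx : x ≠ 0) (j : Fin 3) :
    lame lam mu (fun y i => lambdaMat lam mu y i k) x j = - kelvin lam mu x j k := by
  have hL : 0 < lam + 2 * mu := by linarith
  simp only [LameKelvin.lambdaMat_apply]
  rw [LameKelvin.lame_lambdaCol lam mu hx, LameKelvin.neg_kelvin_apply,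
    LameKelvin.lambdaMatCoeff_isotropic hmu hL, LameKelvin.lambdaMatCoeff_rankOne hmu hL]

end
end

section
/- (Conormal-derivative kernel scaling, used to prove eq. (2.23)) Fix ω ∈ ℂ \ {0} and denote by u_k^ω(x) := Γ^ω(x)e_k the k-th column of the Kupradze matrix. For every real δ > 0, every x ∈ ℝ³ \ {0}, every ν ∈ ℝ³, and every k ∈ {1,2,3}, the conormal derivative satisfies (∂u_k^ω/∂ν)(δ x) = δ⁻² (∂u_k^{δω}/∂ν)(x), where for a C¹ vector field u the conormal derivative with direction ν is ∂u/∂ν := λ (∂_1 u_1 + ∂_2 u_2 + ∂_3 u_3) ν + μ (∇u + (∇u)ᵀ) ν, with Jacobian (∇u)_{jl} = ∂_l u_j. -/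
open Real MeasureTheory

noncomputable section

/-!
The phases `iω|y|/c` only see the product `ω|y|`, so replacing `(ω, y)` by `(ω, δy)` is the same
as replacing it by `(δω, y)`, up to the explicit powers: the `1/|y|` of the first term gives
`δ⁻¹`, and in the Hessian term the potential (`δ⁻¹`) and its two derivatives (`δ⁻²`) are balanced
by `ω⁻² = δ² (δω)⁻²`; hence `Γ^ω(δy) = δ⁻¹ Γ^{δω}(y)`. The conormal derivative is linear in first
derivatives, each of which contributes one more factor `δ⁻¹`.
-/

lemma pd_comp_smul (f : E3 → ℂ) (δ : ℝ) (i : Fin 3) (x : E3) :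
    pd i (fun y => f (δ • y)) x = δ * pd i f (δ • x) := by
  simp [pd, fderiv_comp_smul, Complex.real_smul]

lemma pd_const_mul (c : ℂ) (g : E3 → ℂ) (i : Fin 3) (x : E3) :
    pd i (fun y => c * g y) x = c * pd i g x := by
  change fderiv ℝ (c • g) x (eb i) = _
  rw [fderiv_const_smul_field]
  rfl

section Homogeneity

variable {δ : ℝ} (hδ : δ ≠ 0) {c : ℂ}
include hδ

lemma pd_smul_eq_of_comp_smul {f g : E3 → ℂ} (h : ∀ y, f (δ • y) = c * g y) (i : Fin 3)
    (x : E3) : pd i f (δ • x) = ((δ : ℂ)⁻¹ * c) * pd i g x := by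
  have hδc : (δ : ℂ) ≠ 0 := Complex.ofReal_ne_zero.mpr hδ
  rw [mul_assoc, eq_inv_mul_iff_mul_eq₀ hδc, ← pd_const_mul c g, ← funext h, pd_comp_smul]

lemma hess_smul_eq_of_comp_smul {f g : E3 → ℂ} (h : ∀ y, f (δ • y) = c * g y) (j k : Fin 3)
    (x : E3) : hess f (δ • x) j k = ((δ : ℂ)⁻¹ * ((δ : ℂ)⁻¹ * c)) * hess g x j k :=
  pd_smul_eq_of_comp_smul hδ (pd_smul_eq_of_comp_smul hδ h k) j x

lemma conormal_smul_eq_of_comp_smul {u v : E3 → Fin 3 → ℂ} (h : ∀ y i, u (δ • y) i = c * v y i)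
    (lam mu : ℝ) (ν x : E3) (j : Fin 3) :
    conormal lam mu u ν (δ • x) j = ((δ : ℂ)⁻¹ * c) * conormal lam mu v ν x j := by
  have hpd (i l : Fin 3) : pd l (fun z => u z i) (δ • x) = ((δ : ℂ)⁻¹ * c) * pd l (v · i) x :=
    pd_smul_eq_of_comp_smul hδ (h · i) l x
  simp only [conormal, hpd, Fin.sum_univ_three]
  ring

end Homogeneity

def kupradzeHessianPotential (lam mu : ℝ) (ω : ℂ) (y : E3) : ℂ :=
  (Complex.exp (Complex.I * ω * (‖y‖ : ℂ) / (cT mu : ℂ))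
    - Complex.exp (Complex.I * ω * (‖y‖ : ℂ) / (cL lam mu : ℂ))) / (‖y‖ : ℂ)

section KupradzeScaling

variable {δ : ℝ} (hδ : 0 < δ) (lam mu : ℝ) (ω : ℂ) (y : E3)
include hδ

lemma kupradzeHessianPotential_smul :
    kupradzeHessianPotential lam mu ω (δ • y)
      = (δ : ℂ)⁻¹ * kupradzeHessianPotential lam mu (δ * ω) y := by
  have phase (c : ℂ) : Complex.I * ω * (δ * ‖y‖) / c = Complex.I * (δ * ω) * ‖y‖ / c := by ring
  simp only [kupradzeHessianPotential, norm_smul_of_nonneg hδ.le, Complex.ofReal_mul, phase]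
  ring

lemma kupradze_smul :
    kupradze lam mu ω (δ • y) = (δ : ℂ)⁻¹ • kupradze lam mu (δ * ω) y := by
  ext j k
  have phase : Complex.I * ω * (δ * ‖y‖) / cT mu = Complex.I * (δ * ω) * ‖y‖ / cT mu := by ring
  have hess_smul :=
    hess_smul_eq_of_comp_smul hδ.ne' (kupradzeHessianPotential_smul hδ lam mu ω) j k y
  simp only [kupradze, Matrix.add_apply, Matrix.smul_apply, smul_eq_mul,
    norm_smul_of_nonneg hδ.le, Complex.ofReal_mul, phase]
  change _ + _ * hess (kupradzeHessianPotential lam mu ω) (δ • y) j k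
    = _ * (_ + _ * hess (kupradzeHessianPotential lam mu (δ * ω)) y j k)
  rw [hess_smul]
  ring

end KupradzeScaling

theorem kupradze_conormal_scaling_general (lam mu : ℝ) (ω : ℂ) (δ : ℝ) (hδ : 0 < δ) (x : E3) (ν : E3)
    (k : Fin 3) (j : Fin 3) :
    conormal lam mu (fun y i => kupradze lam mu ω y i k) ν (δ • x) j
      = (((δ : ℂ)) ^ 2)⁻¹
          * conormal lam mu (fun y i => kupradze lam mu ((δ : ℂ) * ω) y i k) ν x j := by
  have column_smul (y : E3) (i : Fin 3) :
      kupradze lam mu ω (δ • y) i k = (δ : ℂ)⁻¹ * kupradze lam mu (δ * ω) y i k := by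
    rw [kupradze_smul hδ, Matrix.smul_apply, smul_eq_mul]
  rw [conormal_smul_eq_of_comp_smul hδ.ne' column_smul, ← mul_inv, sq]

/-- conormal-derivative kernel scaling:
`(∂u_k^ω/∂ν)(δ x) = δ⁻² (∂u_k^{δω}/∂ν)(x)` for the columns of the Kupradze matrix. -/
theorem kupradze_conormal_scaling (lam mu : ℝ) (hmu : 0 < mu) (hconv : 0 < 3 * lam + 2 * mu)
    (ω : ℂ) (hω : ω ≠ 0) (δ : ℝ) (hδ : 0 < δ) (x : E3) (hx : x ≠ 0) (ν : E3) (k : Fin 3)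
    (j : Fin 3) :
    conormal lam mu (fun y i => kupradze lam mu ω y i k) ν (δ • x) j
      = (((δ : ℂ)) ^ 2)⁻¹
          * conormal lam mu (fun y i => kupradze lam mu ((δ : ℂ) * ω) y i k) ν x j :=
  kupradze_conormal_scaling_general lam mu ω δ hδ x ν k j

end
end

section
/- (Theorem 3.1, abstract resolvent estimate) Let H be a nontrivial complex Hilbert space, T : H →L[ℂ] H a continuous linear operator, and k₀ ∈ ℝ. Define G := T∘T∘T − k₀²·T and, for k ∈ ℂ, h(k) := k(k² − k₀²). Assume that G is self-adjoint (IsSelfAdjoint G) and that h(k) ∉ spectrum ℂ G. Then k ∉ spectrum ℂ T, i.e. the operator k·1 − T is invertible, and ‖(k·1 − T)⁻¹‖ ≤ ‖T∘T + k·T + (k² − k₀²)·1‖ / dist(h(k), spectrum ℂ G). -/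
/-!
Since `k - T` commutes with `Q := T² + kT + (k² − k₀²)` and `(k - T) Q = h(k) - G`, invertibility
of `h(k) - G` forces that of `k - T`, with `(k - T)⁻¹ = Q (h(k) - G)⁻¹`. For the normal element
`G`, the continuous functional calculus writes `(h(k) - G)⁻¹` as `cfc (fun x ↦ (h(k) - x)⁻¹) G`,
whose norm is the supremum of `|h(k) - x|⁻¹` over `x ∈ σ(G)`, i.e. `dist(h(k), σ(G))⁻¹`.
-/

section Factorization

variable {R A : Type*} [CommRing R] [Ring A] [Algebra R A]

lemma smul_one_sub_mul_quadratic (a : A) (k c : R) :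
    (k • 1 - a) * (a * a + k • a + (k ^ 2 - c) • 1) =
      algebraMap R A (k * (k ^ 2 - c)) - (a * (a * a) - c • a) := by
  rw [Algebra.algebraMap_eq_smul_one]
  simp only [sub_mul, mul_add, smul_mul_assoc, one_mul, mul_smul_comm, mul_one]
  module

lemma commute_smul_one_sub_quadratic (a : A) (k c : R) :
    Commute (k • 1 - a) (a * a + k • a + (k ^ 2 - c) • 1) := by
  have ha : Commute a (a * a + k • a + (k ^ 2 - c) • 1) :=
    (((Commute.refl a).mul_right (Commute.refl a)).add_right
      ((Commute.refl a).smul_right k)).add_right ((Commute.one_right a).smul_right _)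
  exact ((Commute.one_left _).smul_left k).sub_left ha

end Factorization

lemma Commute.ringInverse_eq_mul_ringInverse_mul {M₀ : Type*} [MonoidWithZero M₀] {p q : M₀}
    (hpq : Commute p q) (h : IsUnit (p * q)) : Ring.inverse p = q * Ring.inverse (p * q) := by
  have hp := (hpq.isUnit_mul_iff.mp h).1
  calc Ring.inverse p = Ring.inverse p * (p * q * Ring.inverse (p * q)) := by
        rw [Ring.mul_inverse_cancel _ h, mul_one]
    _ = q * Ring.inverse (p * q) := by
        rw [← mul_assoc, ← mul_assoc, Ring.inverse_mul_cancel _ hp, one_mul]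

lemma norm_resolvent_le_inv_infDist {A : Type*} [CStarAlgebra A] (a : A) [IsStarNormal a] {z : ℂ}
    (hz : z ∉ spectrum ℂ a) : ‖resolvent a z‖ ≤ (Metric.infDist z (spectrum ℂ a))⁻¹ := by
  have hcfc : cfc (fun x ↦ (z - x)⁻¹) a = resolvent a z := by
    rw [cfc_inv (fun x ↦ z - x) a (fun x hx h ↦ hz (sub_eq_zero.mp h ▸ hx)), cfc_sub .., cfc_const ..,
      cfc_id' ..]
    rfl
  rw [← hcfc]
  refine norm_cfc_le (inv_nonneg.mpr Metric.infDist_nonneg) fun x hx ↦ ?_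
  have hd : 0 < Metric.infDist z (spectrum ℂ a) :=
    ((spectrum.isClosed a).notMem_iff_infDist_pos ⟨x, hx⟩).mp hz
  rw [norm_inv, ← dist_eq_norm]
  exact inv_anti₀ hd (Metric.infDist_le_dist_of_mem hx)

theorem np_resolvent_estimate_general {H : Type*} [NormedAddCommGroup H]
    [InnerProductSpace ℂ H] [CompleteSpace H]
    (T : H →L[ℂ] H) (k₀ : ℝ) (k : ℂ)
    (hG : IsSelfAdjoint (T ∘L T ∘L T - ((k₀ : ℂ) ^ 2) • T))
    (hk : k * (k ^ 2 - (k₀ : ℂ) ^ 2)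
        ∉ spectrum ℂ (T ∘L T ∘L T - ((k₀ : ℂ) ^ 2) • T)) :
    k ∉ spectrum ℂ T ∧
      ‖Ring.inverse (k • (1 : H →L[ℂ] H) - T)‖
        ≤ ‖T ∘L T + k • T + (k ^ 2 - (k₀ : ℂ) ^ 2) • (1 : H →L[ℂ] H)‖
          / Metric.infDist (k * (k ^ 2 - (k₀ : ℂ) ^ 2))
              (spectrum ℂ (T ∘L T ∘L T - ((k₀ : ℂ) ^ 2) • T)) := by
  set G := T ∘L T ∘L T - ((k₀ : ℂ) ^ 2) • T
  set Q := T ∘L T + k • T + (k ^ 2 - (k₀ : ℂ) ^ 2) • (1 : H →L[ℂ] H)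
  have := hG.isStarNormal
  have hfac : (k • 1 - T) * Q = algebraMap ℂ _ (k * (k ^ 2 - (k₀ : ℂ) ^ 2)) - G :=
    smul_one_sub_mul_quadratic T k _
  have hcomm : Commute (k • 1 - T) Q := commute_smul_one_sub_quadratic T k _
  have hunit : IsUnit ((k • 1 - T) * Q) := hfac ▸ spectrum.notMem_iff.mp hk
  refine ⟨?_, ?_⟩
  · rw [spectrum.notMem_iff, Algebra.algebraMap_eq_smul_one]
    exact (hcomm.isUnit_mul_iff.mp hunit).1
  · rw [hcomm.ringInverse_eq_mul_ringInverse_mul hunit, hfac, div_eq_mul_inv]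
    calc ‖Q * resolvent G _‖ ≤ ‖Q‖ * ‖resolvent G _‖ := norm_mul_le _ _
      _ ≤ _ := by gcongr; exact norm_resolvent_le_inv_infDist G hk

/-- Theorem 3.1, abstract resolvent estimate: if
`G := T³ − k₀²·T` is self-adjoint and `h(k) := k(k² − k₀²) ∉ spectrum ℂ G`, then
`k ∉ spectrum ℂ T` and
`‖(k·1 − T)⁻¹‖ ≤ ‖T² + kT + (k² − k₀²)·1‖ / dist(h(k), spectrum ℂ G)`. -/
theorem np_resolvent_estimate {H : Type*} [NormedAddCommGroup H]
    [InnerProductSpace ℂ H] [CompleteSpace H] [Nontrivial H]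
    (T : H →L[ℂ] H) (k₀ : ℝ) (k : ℂ)
    (hG : IsSelfAdjoint (T ∘L T ∘L T - ((k₀ : ℂ) ^ 2) • T))
    (hk : k * (k ^ 2 - (k₀ : ℂ) ^ 2)
        ∉ spectrum ℂ (T ∘L T ∘L T - ((k₀ : ℂ) ^ 2) • T)) :
    k ∉ spectrum ℂ T ∧
      ‖Ring.inverse (k • (1 : H →L[ℂ] H) - T)‖
        ≤ ‖T ∘L T + k • T + (k ^ 2 - (k₀ : ℂ) ^ 2) • (1 : H →L[ℂ] H)‖
          / Metric.infDist (k * (k ^ 2 - (k₀ : ℂ) ^ 2))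
              (spectrum ℂ (T ∘L T ∘L T - ((k₀ : ℂ) ^ 2) • T)) :=
  np_resolvent_estimate_general T k₀ k hG hk
end
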